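/- Let G be the group with presentation ⟨v₁,v₂,h | v₁hv₁⁻¹h⁻¹, v₂hv₂⁻¹h⁻¹, v₁²v₂²⟩, and let φ₆ : G → ℤ/2 be the epimorphism with φ₆(v₁)=1, φ₆(v₂)=0, φ₆(h)=0. Then there is no homomorphism ψ : G → ℤ with φ₆ = (mod 2) ∘ ψ. -/

import Mathlib

open FreeGroup

/-- Relators of π₁(N₁) = ⟨v₁,v₂,h | v₁hv₁⁻¹h⁻¹, v₂hv₂⁻¹h⁻¹, v₁²v₂²⟩,
generators v₁=0, v₂=1, h=2. -/
def relsN1 : Set (FreeGroup (Fin 3)) :=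
  { of 0 * of 2 * (of 0)⁻¹ * (of 2)⁻¹,
    of 1 * of 2 * (of 1)⁻¹ * (of 2)⁻¹,
    of 0 ^ 2 * of 1 ^ 2 }

/-- Reduction mod 2, multiplicatively. -/
def mod2 : Multiplicative ℤ →* Multiplicative (ZMod 2) :=
  AddMonoidHom.toMultiplicative (Int.castAddHom (ZMod 2))

lemma relsN1_of_sq_mul_of_sq :
    (PresentedGroup.of 0 : PresentedGroup relsN1) ^ 2 * PresentedGroup.of 1 ^ 2 = 1 :=
  PresentedGroup.one_of_mem (by simp [relsN1])

/-- `2a + 2b = 0` in ℤ forces `b = -a`, and `-a ≡ a (mod 2)`. -/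
lemma mod2_map_eq_of_sq_mul_sq_eq_one {G : Type*} [Group G] (ψ : G →* Multiplicative ℤ)
    {x y : G} (hxy : x ^ 2 * y ^ 2 = 1) : mod2 (ψ x) = mod2 (ψ y) := by
  have hsum : 2 * (ψ x).toAdd + 2 * (ψ y).toAdd = 0 := by
    simpa [two_mul] using congrArg Multiplicative.toAdd (congrArg ψ hxy)
  have hneg : (ψ y).toAdd = -(ψ x).toAdd := by linarith
  simp only [mod2, AddMonoidHom.toMultiplicative_apply_apply, hneg, map_neg,
    ZMod.neg_eq_self_mod_two]

theorem stmt15 (φ₆ : PresentedGroup relsN1 →* Multiplicative (ZMod 2))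
    (h1 : φ₆ (PresentedGroup.of 0) = Multiplicative.ofAdd (1 : ZMod 2))
    (h2 : φ₆ (PresentedGroup.of 1) = Multiplicative.ofAdd (0 : ZMod 2)) :
    ¬ ∃ ψ : PresentedGroup relsN1 →* Multiplicative ℤ, φ₆ = mod2.comp ψ := by
  rintro ⟨ψ, rfl⟩
  have h12 := mod2_map_eq_of_sq_mul_sq_eq_one ψ relsN1_of_sq_mul_of_sq
  rw [← MonoidHom.comp_apply, h1, ← MonoidHom.comp_apply, h2] at h12
  exact absurd (congrArg Multiplicative.toAdd h12) (by decide)
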